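/- For every τ > 0 and every λ ≥ 0, the sum over all integers s ≥ 0 and all integers k lying in I_s of 2^(−λk − τ·N(k) + τ·ξ·B(k)) is at most 2^(τ·ξ)·2^(−τ)/(1 − 2^(−τ))². -/

import Mathlib

/-! Write `M_s = 2^(q s²)` and `L_s = q (2s+1) + Ξ`, so that the integers of `I_s` are
`M_s, …, M_s + L_s - 1`. The hypothesis `q + 1 + Ξ ≤ 2^(q-1)` gives `M_s + L_s < M_{s+1}`, so the
runs of zeros of `x` (one per block) are separated by nonempty runs of ones. Hence for
`k = M_s + i ∈ I_s` we get `N(k) = L_0 + ⋯ + L_{s-1} + i + 1` and `B(k) = 2s + 1`. As every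
`L_j ≥ Ξ ≥ 2ξ + 1`, the exponent is at most `τξ - τ - τs - τi`, and the double geometric series
over `s` and `i` sums to the bound. -/

open scoped Classical ENNReal
open Real Set Filter

/-- The quadratic function `Q(s) = q·s²`. -/
noncomputable def Qf (q : ℤ) (s : ℝ) : ℝ := (q : ℝ) * s ^ 2

/-- The half-open interval `I_s = [2^(Q(s)), 2^(Q(s)) + Q(s+1) − Q(s) + Ξ)`. -/
noncomputable def Iset (q Ξ : ℤ) (s : ℝ) : Set ℝ :=
  Set.Ico ((2 : ℝ) ^ (Qf q s)) ((2 : ℝ) ^ (Qf q s) + Qf q (s + 1) - Qf q s + (Ξ : ℝ))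

/-- The half-open interval `J_s = [2^(Q(s)) + Q(s+1) − Q(s) + Ξ, 2^(Q(s+1)))`. -/
noncomputable def Jset (q Ξ : ℤ) (s : ℝ) : Set ℝ :=
  Set.Ico ((2 : ℝ) ^ (Qf q s) + Qf q (s + 1) - Qf q s + (Ξ : ℝ)) ((2 : ℝ) ^ (Qf q (s + 1)))

/-- The sequence `(x_j)` in `{0,1}`: `x_j = 0` iff `j + 1 ∈ I_s` for some integer `s ≥ 0`. -/
noncomputable def xseq (q Ξ : ℤ) (j : ℕ) : ℕ :=
  if ∃ s : ℕ, ((j : ℝ) + 1) ∈ Iset q Ξ (s : ℝ) then 0 else 1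

/-- `N(k) = #{ j ∈ {0,…,k−1} : x_j = 0 }`, with `N(0) = 0`. -/
noncomputable def Nf (q Ξ : ℤ) (k : ℕ) : ℕ :=
  ((Finset.range k).filter (fun j => xseq q Ξ j = 0)).card

/-- `B(0) = 0`, `B(1) = 1`, and for `k ≥ 2`,
`B(k) = 1 + #{ j ∈ {0,…,k−2} : x_j ≠ x_{j+1} }`. -/
noncomputable def Bf (q Ξ : ℤ) (k : ℕ) : ℕ :=
  if k = 0 then 0
  else 1 + ((Finset.range (k - 1)).filter (fun j => xseq q Ξ j ≠ xseq q Ξ (j + 1))).card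

/-- The length `|J_s| = 2^(Q(s+1)) − 2^(Q(s)) − (Q(s+1) − Q(s) + Ξ)` of `J_s`. -/
noncomputable def Jlen (q Ξ : ℤ) (s : ℝ) : ℝ :=
  (2 : ℝ) ^ (Qf q (s + 1)) - (2 : ℝ) ^ (Qf q s) - (Qf q (s + 1) - Qf q s + (Ξ : ℝ))

/-- `λ(s) = 1/|J_s|`. -/
noncomputable def lamf (q Ξ : ℤ) (s : ℝ) : ℝ := 1 / Jlen q Ξ s

/-- The two-variable series `Π(τ,λ) = Σ_{k≥0} 2^(−λk − τ·N(k) + τ·ξ·B(k))`, a sum in `[0,∞]`. -/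
noncomputable def Pi2 (q Ξ : ℤ) (ξ τ lam : ℝ) : ℝ≥0∞ :=
  ∑' k : ℕ, ENNReal.ofReal
    ((2 : ℝ) ^ (-lam * (k : ℝ) - τ * (Nf q Ξ k : ℝ) + τ * ξ * (Bf q Ξ k : ℝ)))


open Finset

def blockStart (q s : ℕ) : ℕ := 2 ^ (q * s ^ 2)

def blockLen (q : ℕ) (Ξ : ℤ) (s : ℕ) : ℕ := (q * (2 * s + 1) + Ξ).toNat

lemma two_rpow_Qf_natCast (q s : ℕ) : (2 : ℝ) ^ Qf q s = blockStart q s := by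
  rw [Qf, blockStart]
  norm_cast

lemma one_le_blockStart (q s : ℕ) : 1 ≤ blockStart q s := Nat.one_le_two_pow

lemma blockStart_mono (q : ℕ) : Monotone (blockStart q) := fun _ _ h =>
  Nat.pow_le_pow_right two_pos (Nat.mul_le_mul_left _ (Nat.pow_le_pow_left h 2))

section blocks

variable {q : ℕ} {Ξ : ℤ} (hqΞ : 1 ≤ (q : ℤ) + Ξ)
include hqΞ

lemma blockLen_cast (s : ℕ) : (blockLen q Ξ s : ℤ) = q * (2 * s + 1) + Ξ :=
  Int.toNat_of_nonneg (by nlinarith)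

lemma one_le_blockLen (s : ℕ) : 1 ≤ blockLen q Ξ s := by
  have := blockLen_cast hqΞ s
  have : (1 : ℤ) ≤ blockLen q Ξ s := by rw [this]; nlinarith
  exact_mod_cast this

lemma natCast_mem_Iset_iff (k s : ℕ) :
    (k : ℝ) ∈ Iset q Ξ s ↔ blockStart q s ≤ k ∧ k < blockStart q s + blockLen q Ξ s := by
  have hlen : Qf q (s + 1) - Qf q s + Ξ = (blockLen q Ξ s : ℝ) := by
    rw [show (blockLen q Ξ s : ℝ) = ((blockLen q Ξ s : ℤ) : ℝ) by norm_cast, blockLen_cast hqΞ]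
    simp only [Qf]
    push_cast
    ring
  rw [Iset, Set.mem_Ico, add_sub_assoc, add_assoc, hlen, two_rpow_Qf_natCast]
  norm_cast

lemma xseq_eq_zero_of_mem_block {j s : ℕ} (h₁ : blockStart q s ≤ j + 1)
    (h₂ : j + 1 < blockStart q s + blockLen q Ξ s) : xseq q Ξ j = 0 := by
  rw [xseq, if_pos ⟨s, by exact_mod_cast (natCast_mem_Iset_iff hqΞ (j + 1) s).2 ⟨h₁, h₂⟩⟩]

end blocks

lemma add_lt_two_pow_of_le {m n : ℕ} {c : ℤ} (hmn : m ≤ n) (h : m + c < 2 ^ m) :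
    n + c < 2 ^ n := by
  induction n, hmn using Nat.le_induction with
  | base => exact h
  | succ n _ ih =>
    have : (1 : ℤ) ≤ 2 ^ n := one_le_pow₀ one_le_two
    push_cast
    rw [pow_succ]
    linarith

section gaps

variable {q : ℕ} {Ξ : ℤ} (hqΞ : 1 ≤ (q : ℤ) + Ξ) (hgap : (q : ℤ) + Ξ + 1 < 2 ^ q)
include hqΞ hgap

lemma blockStart_add_blockLen_lt (s : ℕ) :
    blockStart q s + blockLen q Ξ s < blockStart q (s + 1) := by
  have hstep : blockStart q (s + 1) = blockStart q s * 2 ^ (q * (2 * s + 1)) := by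
    rw [blockStart, blockStart, ← pow_add]
    ring_nf
  have hlen : (q * (2 * s + 1) : ℕ) + (Ξ + 1) < 2 ^ (q * (2 * s + 1)) :=
    add_lt_two_pow_of_le (Nat.le_mul_of_pos_right q (by omega)) (by linarith)
  have hM : (1 : ℤ) ≤ blockStart q s := by exact_mod_cast one_le_blockStart q s
  have hP : (1 : ℤ) ≤ 2 ^ (q * (2 * s + 1)) := one_le_pow₀ one_le_two
  zify
  rw [hstep, blockLen_cast hqΞ]
  push_cast at hlen ⊢
  nlinarith [mul_nonneg (sub_nonneg.2 hM) (sub_nonneg.2 hP)]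

lemma blockStart_add_blockLen_le_of_lt {s t : ℕ} (hst : s < t) :
    blockStart q s + blockLen q Ξ s ≤ blockStart q t :=
  (blockStart_add_blockLen_lt hqΞ hgap s).le.trans (blockStart_mono q hst)

lemma xseq_eq_one_of_mem_gap {j s : ℕ} (h₁ : blockStart q s + blockLen q Ξ s ≤ j + 1)
    (h₂ : j + 1 < blockStart q (s + 1)) : xseq q Ξ j = 1 := by
  refine if_neg fun ⟨t, ht⟩ => ?_
  obtain ⟨ht₁, ht₂⟩ := (natCast_mem_Iset_iff hqΞ (j + 1) t).1 (by exact_mod_cast ht)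
  rcases lt_trichotomy t s with hts | rfl | hst
  · have := blockStart_add_blockLen_le_of_lt hqΞ hgap hts
    omega
  · omega
  · have := blockStart_mono q (show s + 1 ≤ t from hst)
    omega

end gaps

section counting

variable (q : ℤ) (Ξ : ℤ)

lemma Nf_succ (k : ℕ) : Nf q Ξ (k + 1) = Nf q Ξ k + if xseq q Ξ k = 0 then 1 else 0 := by
  rw [Nf, Nf, range_add_one, filter_insert]
  split_ifs with h
  · rw [card_insert_of_notMem (by simp)]
  · rfl

lemma Bf_succ_succ (k : ℕ) :
    Bf q Ξ (k + 2) = Bf q Ξ (k + 1) + if xseq q Ξ k = xseq q Ξ (k + 1) then 0 else 1 := by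
  rw [Bf, Bf, if_neg (by omega), if_neg (by omega), show k + 2 - 1 = k + 1 by omega,
    Nat.add_sub_cancel, range_add_one, filter_insert]
  by_cases h : xseq q Ξ k = xseq q Ξ (k + 1)
  · rw [if_neg (not_not.2 h), if_pos h, add_zero]
  · rw [if_pos h, if_neg h, card_insert_of_notMem (by simp)]
    omega

variable {q Ξ}

lemma Nf_add_of_zero_run {m n : ℕ} (h : ∀ i < n, xseq q Ξ (m + i) = 0) :
    Nf q Ξ (m + n) = Nf q Ξ m + n := by
  induction n with
  | zero => rfl
  | succ n ih =>
    rw [← add_assoc, Nf_succ, if_pos (h n n.lt_succ_self), ih fun i hi => h i (by omega)]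
    ring

lemma Nf_add_of_one_run {m n : ℕ} (h : ∀ i < n, xseq q Ξ (m + i) = 1) :
    Nf q Ξ (m + n) = Nf q Ξ m := by
  induction n with
  | zero => rfl
  | succ n ih =>
    rw [← add_assoc, Nf_succ, if_neg (by simp [h n n.lt_succ_self]),
      ih fun i hi => h i (by omega), add_zero]

lemma Bf_add_of_const_run {m n c : ℕ} (h : ∀ i ≤ n, xseq q Ξ (m + i) = c) :
    Bf q Ξ (m + 1 + n) = Bf q Ξ (m + 1) := by
  induction n with
  | zero => rfl
  | succ n ih =>
    have hn : xseq q Ξ (m + n) = xseq q Ξ (m + n + 1) := by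
      rw [h n (by omega), ← h (n + 1) le_rfl, add_assoc]
    rw [show m + 1 + (n + 1) = m + n + 2 by ring, Bf_succ_succ, if_pos hn,
      show m + n + 1 = m + 1 + n by ring, ih fun i hi => h i (by omega), add_zero]

lemma Bf_succ_succ_of_ne {m : ℕ} (h : xseq q Ξ m ≠ xseq q Ξ (m + 1)) :
    Bf q Ξ (m + 2) = Bf q Ξ (m + 1) + 1 := by
  rw [Bf_succ_succ, if_neg h]

lemma Nf_Bf_of_zero_run_of_one_run {a l g : ℕ} (hzero : ∀ i ≤ l, xseq q Ξ (a + i) = 0)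
    (hone : ∀ i ≤ g, xseq q Ξ (a + l + 1 + i) = 1) (hnext : xseq q Ξ (a + l + g + 2) = 0) :
    Nf q Ξ (a + l + g + 2) = Nf q Ξ a + (l + 1) ∧
      Bf q Ξ (a + l + g + 3) = Bf q Ξ (a + 1) + 2 := by
  constructor
  · rw [show a + l + g + 2 = a + (l + 1) + (g + 1) by ring,
      Nf_add_of_one_run fun i hi => by rw [← add_assoc]; exact hone i (by omega),
      Nf_add_of_zero_run fun i hi => hzero i (by omega)]
  · have hzero_end : Bf q Ξ (a + 1 + l) = Bf q Ξ (a + 1) := Bf_add_of_const_run hzero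
    have hone_end : Bf q Ξ (a + l + 1 + 1 + g) = Bf q Ξ (a + l + 1 + 1) :=
      Bf_add_of_const_run hone
    have hswitch₁ : Bf q Ξ (a + l + 2) = Bf q Ξ (a + l + 1) + 1 := Bf_succ_succ_of_ne <| by
      rw [hzero l le_rfl, ← add_zero (a + l + 1), hone 0 (Nat.zero_le _)]
      simp
    have hswitch₂ : Bf q Ξ (a + l + 1 + g + 2) = Bf q Ξ (a + l + 1 + g + 1) + 1 :=
      Bf_succ_succ_of_ne <| by
        rw [hone g le_rfl, show a + l + 1 + g + 1 = a + l + g + 2 by ring, hnext]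
        simp
    rw [show a + l + g + 3 = a + l + 1 + g + 2 by ring, hswitch₂,
      show a + l + 1 + g + 1 = a + l + 1 + 1 + g by ring, hone_end,
      show a + l + 1 + 1 = a + l + 2 by ring, hswitch₁, show a + l + 1 = a + 1 + l by ring,
      hzero_end]

end counting

section blockFormulas

variable {q : ℕ} {Ξ : ℤ} (hqΞ : 1 ≤ (q : ℤ) + Ξ) (hgap : (q : ℤ) + Ξ + 1 < 2 ^ q)
include hqΞ hgap

-- The zero run of `xseq` coming from `I_s` starts at index `a = M_s - 1`, as `x_j` encodes `j + 1`.
lemma Nf_Bf_blockStart (s : ℕ) {a : ℕ} (ha : blockStart q s = a + 1) :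
    Nf q Ξ a = ∑ i ∈ range s, blockLen q Ξ i ∧ Bf q Ξ (a + 1) = 2 * s + 1 := by
  induction s generalizing a with
  | zero =>
    obtain rfl : a = 0 := by simpa [blockStart] using ha
    simp [Nf, Bf]
  | succ s ih =>
    obtain ⟨b, hb⟩ := Nat.exists_eq_add_one.2 (one_le_blockStart q s)
    obtain ⟨l, hl⟩ := Nat.exists_eq_add_one.2 (one_le_blockLen hqΞ s)
    have hlt := blockStart_add_blockLen_lt hqΞ hgap s
    have hnext := one_le_blockLen hqΞ (s + 1)
    obtain ⟨g, rfl⟩ : ∃ g, a = b + l + g + 2 := ⟨a - (b + l + 2), by omega⟩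
    obtain ⟨hN, hB⟩ := ih hb
    obtain ⟨hN', hB'⟩ := Nf_Bf_of_zero_run_of_one_run (q := q) (Ξ := Ξ) (a := b) (l := l) (g := g)
      (fun i hi => xseq_eq_zero_of_mem_block hqΞ (s := s) (by omega) (by omega))
      (fun i hi => xseq_eq_one_of_mem_gap hqΞ hgap (s := s) (by omega) (by omega))
      (xseq_eq_zero_of_mem_block hqΞ (s := s + 1) (by omega) (by omega))
    refine ⟨by rw [hN', hN, sum_range_succ, hl], ?_⟩
    rw [show b + l + g + 2 + 1 = b + l + g + 3 by ring, hB', hB]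
    ring

lemma Nf_Bf_of_lt_blockLen (s : ℕ) {i : ℕ} (hi : i < blockLen q Ξ s) :
    Nf q Ξ (blockStart q s + i) = ∑ j ∈ range s, blockLen q Ξ j + (i + 1) ∧
      Bf q Ξ (blockStart q s + i) = 2 * s + 1 := by
  obtain ⟨a, ha⟩ := Nat.exists_eq_add_one.2 (one_le_blockStart q s)
  obtain ⟨hN, hB⟩ := Nf_Bf_blockStart hqΞ hgap s ha
  have hzero : ∀ j ≤ i, xseq q Ξ (a + j) = 0 := fun j hj =>
    xseq_eq_zero_of_mem_block hqΞ (s := s) (by omega) (by omega)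
  rw [ha, add_assoc, ← hN, ← hB, ← Nf_add_of_zero_run fun j hj => hzero j (by omega),
    ← Bf_add_of_const_run hzero]
  exact ⟨by ring_nf, by ring_nf⟩

end blockFormulas

lemma tsum_ite_natCast_mem_Iset {q : ℕ} {Ξ : ℤ} (hqΞ : 1 ≤ (q : ℤ) + Ξ) (s : ℕ)
    (F : ℕ → ℝ≥0∞) :
    ∑' k : ℕ, (if (k : ℝ) ∈ Iset q Ξ s then F k else 0) =
      ∑ i ∈ range (blockLen q Ξ s), F (blockStart q s + i) := by
  simp_rw [natCast_mem_Iset_iff hqΞ]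
  rw [tsum_eq_sum (s := Ico (blockStart q s) (blockStart q s + blockLen q Ξ s))
    fun k hk => if_neg (by simpa using hk), sum_Ico_eq_sum_range, Nat.add_sub_cancel_left]
  exact sum_congr rfl fun i hi => if_pos (by simpa using hi)

lemma tsum_tsum_ofReal_mul_pow_mul_pow {C r : ℝ} (hC : 0 ≤ C) (hr₀ : 0 ≤ r) (hr₁ : r < 1) :
    ∑' s : ℕ, ∑' i : ℕ, ENNReal.ofReal (C * r ^ s * r ^ i) = ENNReal.ofReal (C / (1 - r) ^ 2) := by
  have hsub : ENNReal.ofReal (1 - r) = 1 - ENNReal.ofReal r := by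
    rw [ENNReal.ofReal_sub _ hr₀, ENNReal.ofReal_one]
  simp_rw [ENNReal.ofReal_mul (mul_nonneg hC (pow_nonneg hr₀ _)), ENNReal.ofReal_mul hC,
    ENNReal.ofReal_pow hr₀, ENNReal.tsum_mul_left, ENNReal.tsum_mul_right, ENNReal.tsum_geometric]
  rw [ENNReal.tsum_mul_left, ENNReal.tsum_geometric, ENNReal.ofReal_div_of_pos (by nlinarith),
    ENNReal.ofReal_pow (by linarith), hsub, div_eq_mul_inv, ENNReal.inv_pow]
  ring

lemma mul_le_sum_blockLen {q : ℕ} {Ξ : ℤ} {ξ : ℝ} (hqΞ : 1 ≤ (q : ℤ) + Ξ)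
    (hξ : 1 ≤ (Ξ : ℝ) - 2 * ξ) (s : ℕ) :
    s * (2 * ξ + 1) ≤ ∑ j ∈ range s, (blockLen q Ξ j : ℝ) := by
  have hlen : ∀ j ∈ range s, 2 * ξ + 1 ≤ (blockLen q Ξ j : ℝ) := fun j _ => by
    rw [show (blockLen q Ξ j : ℝ) = ((blockLen q Ξ j : ℤ) : ℝ) by norm_cast, blockLen_cast hqΞ]
    push_cast
    nlinarith [mul_nonneg (Nat.cast_nonneg (α := ℝ) q) (Nat.cast_nonneg (α := ℝ) j)]
  simpa only [card_range, nsmul_eq_mul] using card_nsmul_le_sum (range s) _ _ hlen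

lemma two_rpow_exponent_le_of_lt_blockLen {q : ℕ} {Ξ : ℤ} {ξ τ lam : ℝ}
    (hqΞ : 1 ≤ (q : ℤ) + Ξ) (hgap : (q : ℤ) + Ξ + 1 < 2 ^ q) (hξ : 1 ≤ (Ξ : ℝ) - 2 * ξ)
    (hτ : 0 ≤ τ) (hlam : 0 ≤ lam) (s : ℕ) {i : ℕ} (hi : i < blockLen q Ξ s) :
    (2 : ℝ) ^ (-lam * ((blockStart q s + i : ℕ) : ℝ) - τ * (Nf q Ξ (blockStart q s + i) : ℝ)
        + τ * ξ * (Bf q Ξ (blockStart q s + i) : ℝ)) ≤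
      (2 : ℝ) ^ (τ * ξ) * (2 : ℝ) ^ (-τ) * ((2 : ℝ) ^ (-τ)) ^ s * ((2 : ℝ) ^ (-τ)) ^ i := by
  obtain ⟨hN, hB⟩ := Nf_Bf_of_lt_blockLen hqΞ hgap s hi
  have hsum := mul_le_sum_blockLen hqΞ hξ s
  have hk : 0 ≤ lam * ((blockStart q s + i : ℕ) : ℝ) := mul_nonneg hlam (Nat.cast_nonneg _)
  rw [← Real.rpow_mul_natCast zero_le_two, ← Real.rpow_mul_natCast zero_le_two,
    ← Real.rpow_add two_pos, ← Real.rpow_add two_pos, ← Real.rpow_add two_pos, hN, hB]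
  refine Real.rpow_le_rpow_of_exponent_le one_le_two ?_
  push_cast
  nlinarith [mul_le_mul_of_nonneg_left hsum hτ]

theorem stmt11_general (Ξ q : ℤ) (hq : 3 ≤ q) (hqΞ : 1 ≤ q + Ξ)
    (hpow : (q : ℝ) + 1 + (Ξ : ℝ) ≤ (2 : ℝ) ^ ((q : ℝ) - 1))
    (ξ : ℝ) (hξ1 : 1 ≤ (Ξ : ℝ) - 2 * ξ) :
    ∀ τ : ℝ, 0 < τ → ∀ lam : ℝ, 0 ≤ lam →
      (∑' s : ℕ, ∑' k : ℕ,
          if (k : ℝ) ∈ Iset q Ξ (s : ℝ) then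
            ENNReal.ofReal ((2 : ℝ) ^ (-lam * (k : ℝ) - τ * (Nf q Ξ k : ℝ)
              + τ * ξ * (Bf q Ξ k : ℝ)))
          else 0) ≤
        ENNReal.ofReal ((2 : ℝ) ^ (τ * ξ) * (2 : ℝ) ^ (-τ) / (1 - (2 : ℝ) ^ (-τ)) ^ 2) := by
  intro τ hτ lam hlam
  lift q to ℕ using by omega
  have hgap : (q : ℤ) + Ξ + 1 < 2 ^ q := by
    have : (2 : ℝ) ^ ((q : ℝ) - 1) < 2 ^ q := by
      rw [← Real.rpow_natCast]
      exact Real.rpow_lt_rpow_of_exponent_lt one_lt_two (by linarith)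
    push_cast at hpow
    exact_mod_cast (by linarith : (q : ℝ) + Ξ + 1 < 2 ^ q)
  set r : ℝ := (2 : ℝ) ^ (-τ)
  have hr₀ : 0 ≤ r := by positivity
  have hr₁ : r < 1 := Real.rpow_lt_one_of_one_lt_of_neg one_lt_two (by linarith)
  calc _ = ∑' s : ℕ, ∑ i ∈ range (blockLen q Ξ s), ENNReal.ofReal ((2 : ℝ) ^
          (-lam * ((blockStart q s + i : ℕ) : ℝ) - τ * (Nf q Ξ (blockStart q s + i) : ℝ)
            + τ * ξ * (Bf q Ξ (blockStart q s + i) : ℝ))) :=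
        tsum_congr fun s => tsum_ite_natCast_mem_Iset hqΞ s _
    _ ≤ ∑' s : ℕ, ∑' i : ℕ, ENNReal.ofReal ((2 : ℝ) ^ (τ * ξ) * r * r ^ s * r ^ i) :=
        ENNReal.tsum_le_tsum fun s => (sum_le_sum fun i hi => ENNReal.ofReal_le_ofReal
          (two_rpow_exponent_le_of_lt_blockLen hqΞ hgap hξ1 hτ.le hlam s (mem_range.1 hi))).trans
          (ENNReal.sum_le_tsum _)
    _ = _ := tsum_tsum_ofReal_mul_pow_mul_pow (by positivity) hr₀ hr₁

theorem stmt11 (Ξ q : ℤ) (hq : 3 ≤ q) (hqΞ : 1 ≤ q + Ξ)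
    (hpow : (q : ℝ) + 1 + (Ξ : ℝ) ≤ (2 : ℝ) ^ ((q : ℝ) - 1))
    (ξ : ℝ) (hξ1 : 1 ≤ (Ξ : ℝ) - 2 * ξ) (hξ2 : (Ξ : ℝ) - 2 * ξ ≤ 2) :
    ∀ τ : ℝ, 0 < τ → ∀ lam : ℝ, 0 ≤ lam →
      (∑' s : ℕ, ∑' k : ℕ,
          if (k : ℝ) ∈ Iset q Ξ (s : ℝ) then
            ENNReal.ofReal ((2 : ℝ) ^ (-lam * (k : ℝ) - τ * (Nf q Ξ k : ℝ)
              + τ * ξ * (Bf q Ξ k : ℝ)))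
          else 0) ≤
        ENNReal.ofReal ((2 : ℝ) ^ (τ * ξ) * (2 : ℝ) ^ (-τ) / (1 - (2 : ℝ) ^ (-τ)) ^ 2) :=
  stmt11_general Ξ q hq hqΞ hpow ξ hξ1
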